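/- The concentric flow boundary value problem on the annulus {1/2 ≤ |x| ≤ 2} with piecewise viscosity μ = 2𝟙_{0<r<1} + 𝟙_{r≥1} and boundary conditions g(1/2) = g₋, g(2) = g₊ is satisfied by the piecewise profile g iff C = (3 ln2/4)^{-1}(9C₁/8 − g₊ + g₋) and C₂ = (1/3)(9C₁/8 + g₊ + 2g₋); in particular there are uncountably many solutions parametrized by C₁ ∈ ℝ. -/

import Mathlib

/-- The piecewise concentric-flow profile with viscosity `2` for `r<1`, `1` for `r≥1`. -/
noncomputable def concg (C C₁ C₂ : ℝ) (r : ℝ) : ℝ :=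
  if r < 1 then -C / 4 * Real.log r - C₁ / 4 * (1 / r ^ 2 - 1) + C₂
  else -C / 2 * Real.log r - C₁ / 2 * (1 / r ^ 2 - 1) + C₂

/-! Both boundary values are affine in `(C, C₁, C₂)`, and `log 2 ≠ 0` makes the resulting
`2 × 2` system in `(C, C₂)` uniquely solvable for each `C₁`. At the interface `r = 1` the
profile equals `C₂`, which depends injectively on `C₁` along the solution family. -/

theorem concg_half (C C₁ C₂ : ℝ) :
    concg C C₁ C₂ (1 / 2) = C / 4 * Real.log 2 - 3 * C₁ / 4 + C₂ := by
  rw [concg, if_pos (by norm_num), one_div, Real.log_inv]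
  ring

theorem concg_two (C C₁ C₂ : ℝ) :
    concg C C₁ C₂ 2 = -C / 2 * Real.log 2 + 3 * C₁ / 8 + C₂ := by
  rw [concg, if_neg (by norm_num)]
  ring

theorem concg_one (C C₁ C₂ : ℝ) : concg C C₁ C₂ 1 = C₂ := by
  rw [concg, if_neg (lt_irrefl 1), Real.log_one]
  ring

theorem boundary_system_iff {L : ℝ} (hL : L ≠ 0) (gm gp C C₁ C₂ : ℝ) :
    (C / 4 * L - 3 * C₁ / 4 + C₂ = gm ∧ -C / 2 * L + 3 * C₁ / 8 + C₂ = gp) ↔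
      (C = (3 * L / 4)⁻¹ * (9 * C₁ / 8 - gp + gm) ∧
        C₂ = (1 / 3) * (9 * C₁ / 8 + gp + 2 * gm)) := by
  constructor
  · rintro ⟨hm, hp⟩
    refine ⟨?_, by linarith⟩
    field_simp
    linarith
  · rintro ⟨rfl, rfl⟩
    constructor <;> field_simp <;> ring

/-- Concentric boundary value problem on the annulus `{1/2 ≤ |x| ≤ 2}`:
`g(1/2) = g₋` and `g(2) = g₊` iff `C = (3 ln2/4)⁻¹(9C₁/8 - g₊ + g₋)` and
`C₂ = (1/3)(9C₁/8 + g₊ + 2g₋)`; the solutions are injectively parametrized by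
`C₁ ∈ ℝ`, so there are uncountably many of them. -/
theorem stmt15 (gm gp : ℝ) :
    (∀ C C₁ C₂ : ℝ,
      (concg C C₁ C₂ (1 / 2) = gm ∧ concg C C₁ C₂ 2 = gp) ↔
      (C = (3 * Real.log 2 / 4)⁻¹ * (9 * C₁ / 8 - gp + gm) ∧
       C₂ = (1 / 3) * (9 * C₁ / 8 + gp + 2 * gm))) ∧
    Function.Injective (fun C₁ : ℝ =>
      concg ((3 * Real.log 2 / 4)⁻¹ * (9 * C₁ / 8 - gp + gm)) C₁
        ((1 / 3) * (9 * C₁ / 8 + gp + 2 * gm))) := by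
  refine ⟨fun C C₁ C₂ => ?_, fun a b hab => ?_⟩
  · rw [concg_half, concg_two]
    exact boundary_system_iff (Real.log_pos one_lt_two).ne' gm gp C C₁ C₂
  · have h := congrFun hab 1
    simp only [concg_one] at h
    linarith
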